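/- arXiv:1210.5305 — 2 statements merged into one kernel-verified Lean document; each statement's English description precedes it below -/
import Mathlib

section
/- Let n be a positive integer, k_1, ..., k_n positive integers, and a, b, q parameters. Then det\left(\frac{(aq;q)_{k_i+j-2}}{(abq^2;q)_{k_i+j-2}}\right)_{1≤i,j≤n} = a^{n(n-1)/2} q^{(n+1)n(n-1)/6} \prod_{i=1}^n \frac{(aq;q)_{k_i-1}}{(abq^2;q)_{k_i+n-2}} \prod_{1≤i<j≤n}(q^{k_i-1} - q^{k_j-1}) \prod_{j=1}^n (bq;q)_{j-1}. -/
open Finset Polynomial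

/-- q-Pochhammer symbol `(x;q)_m = ∏_{i=0}^{m-1} (1 - x q^i)`. -/
noncomputable def qPoch (x q : ℂ) (m : ℕ) : ℂ := ∏ i ∈ Finset.range m, (1 - x * q ^ i)

section General
variable {R : Type*} [CommRing R]

noncomputable def colPoly (n : ℕ) (A B : ℕ → R) (j : ℕ) : Polynomial R :=
  (∏ t ∈ range j, (1 - Polynomial.C (B t) * Polynomial.X)) *
  ∏ t ∈ Finset.Ico j (n-1), (1 - Polynomial.C (A t) * Polynomial.X)

noncomputable def coeffMat (n : ℕ) (A B : ℕ → R) : Matrix (Fin n) (Fin n) R :=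
  Matrix.of fun t j : Fin n => (colPoly n A B j.val).coeff t.val

lemma natDegree_colPoly_lt (n : ℕ) (hn : 1 ≤ n) (A B : ℕ → R) (j : ℕ) (hj : j ≤ n - 1) :
    (colPoly n A B j).natDegree < n := by
  have h1 : ∀ c : R, (1 - Polynomial.C c * Polynomial.X).natDegree ≤ 1 := by
    intro c
    refine le_trans (natDegree_sub_le _ _) (max_le (le_trans (le_of_eq natDegree_one) (by omega)) ?_)
    exact le_trans (natDegree_C_mul_le c X) natDegree_X_le
  have h2 : (∏ t ∈ range j, (1 - Polynomial.C (B t) * Polynomial.X)).natDegree ≤ j := by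
    refine le_trans (natDegree_prod_le _ _) ?_
    refine le_trans (Finset.sum_le_sum fun t _ => h1 (B t)) (by simp)
  have h3 : (∏ t ∈ Finset.Ico j (n-1), (1 - Polynomial.C (A t) * Polynomial.X)).natDegree ≤ n - 1 - j := by
    refine le_trans (natDegree_prod_le _ _) ?_
    refine le_trans (Finset.sum_le_sum fun t _ => h1 (A t)) (by simp [Nat.card_Ico])
  have := natDegree_mul_le (p := (∏ t ∈ range j, (1 - Polynomial.C (B t) * Polynomial.X)))
    (q := ∏ t ∈ Finset.Ico j (n-1), (1 - Polynomial.C (A t) * Polynomial.X))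
  unfold colPoly
  omega

lemma eval_colPoly (n : ℕ) (A B : ℕ → R) (j : ℕ) (x : R) :
    (colPoly n A B j).eval x
      = (∏ t ∈ range j, (1 - B t * x)) * ∏ t ∈ Finset.Ico j (n-1), (1 - A t * x) := by
  simp [colPoly, eval_prod]

lemma factorMat (n : ℕ) (hn : 1 ≤ n) (A B : ℕ → R) (x : Fin n → R) :
    (Matrix.of fun i j : Fin n =>
      (∏ t ∈ range j.val, (1 - B t * x i)) * ∏ t ∈ Finset.Ico j.val (n-1), (1 - A t * x i))
    = Matrix.vandermonde x * coeffMat n A B := by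
  ext i j
  rw [Matrix.mul_apply, Matrix.of_apply, ← eval_colPoly n A B j.val (x i),
    Polynomial.eval_eq_sum_range' (natDegree_colPoly_lt n hn A B j.val (by omega)) (x i),
    ← Fin.sum_univ_eq_sum_range (fun t => (colPoly n A B j.val).coeff t * x i ^ t) n]
  exact Finset.sum_congr rfl fun t _ => by
    simp [Matrix.vandermonde, coeffMat, mul_comm]

lemma colPoly_map {S : Type*} [CommRing S] (f : R →+* S) (n : ℕ) (A B : ℕ → R) (j : ℕ) :
    (colPoly n A B j).map f = colPoly n (f ∘ A) (f ∘ B) j := by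
  simp [colPoly, Polynomial.map_prod]

lemma coeffMat_map {S : Type*} [CommRing S] (f : R →+* S) (n : ℕ) (A B : ℕ → R) :
    (coeffMat n A B).map f = coeffMat n (f ∘ A) (f ∘ B) := by
  ext t j
  rw [Matrix.map_apply]
  show f ((colPoly n A B j.val).coeff t.val) = (colPoly n (f ∘ A) (f ∘ B) j.val).coeff t.val
  rw [← colPoly_map f n A B j.val, Polynomial.coeff_map]

end General

section Helpers

lemma prod_Iio_val {M : Type*} [CommMonoid M] {n : ℕ} (j : Fin n) (g : ℕ → M) :
    ∏ i ∈ Finset.Iio j, g i.val = ∏ t ∈ range j.val, g t := by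
  have h : (Finset.Iio j).map Fin.valEmbedding = range j.val := by
    rw [Fin.map_valEmbedding_Iio, Nat.Iio_eq_range]
  rw [← h, Finset.prod_map]
  rfl

lemma prod_Ioi_comm {M : Type*} [CommMonoid M] {n : ℕ} (f : Fin n → Fin n → M) :
    ∏ i : Fin n, ∏ j ∈ Finset.Ioi i, f i j = ∏ j : Fin n, ∏ i ∈ Finset.Iio j, f i j :=
  Finset.prod_comm' (fun i j => by simp [Finset.mem_Ioi, Finset.mem_Iio, and_comm])

lemma prod_pow_card {K : Type*} [CommRing K] {n : ℕ} (f : Fin n → K) :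
    ∏ i : Fin n, f i ^ (n-1) = ∏ i : Fin n, ∏ j ∈ Finset.Ioi i, (f i * f j) := by
  have h1 : ∏ i : Fin n, ∏ j ∈ Finset.Ioi i, (f i * f j)
      = (∏ i : Fin n, ∏ j ∈ Finset.Ioi i, f i) * ∏ i : Fin n, ∏ j ∈ Finset.Ioi i, f j := by
    rw [← Finset.prod_mul_distrib]
    exact Finset.prod_congr rfl fun i _ => Finset.prod_mul_distrib
  rw [h1, prod_Ioi_comm (fun i j => f j)]
  simp only [Finset.prod_const, Fin.card_Ioi, Fin.card_Iio]
  rw [← Finset.prod_mul_distrib]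
  exact (Finset.prod_congr rfl fun i _ => by
    have := i.isLt; rw [← pow_add]; congr 1; omega).symm

lemma sum_card_Ioi (n : ℕ) : ∑ i : Fin n, (n - 1 - i.val) = n * (n-1) / 2 := by
  rw [Fin.sum_univ_eq_sum_range (fun t => n - 1 - t) n,
    Finset.sum_range_reflect (fun t => t) n]
  exact Finset.sum_range_id n

lemma prod_Ioi_neg {K : Type*} [CommRing K] {n : ℕ} (g : Fin n → Fin n → K) :
    ∏ i : Fin n, ∏ j ∈ Finset.Ioi i, (- g i j)
      = (-1 : K) ^ (n * (n-1) / 2) * ∏ i : Fin n, ∏ j ∈ Finset.Ioi i, g i j := by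
  have h : ∀ i : Fin n, ∏ j ∈ Finset.Ioi i, (- g i j)
      = (-1 : K) ^ (n - 1 - i.val) * ∏ j ∈ Finset.Ioi i, g i j := by
    intro i
    rw [← Fin.card_Ioi i, ← Finset.prod_const, ← Finset.prod_mul_distrib]
    exact Finset.prod_congr rfl fun j _ => by ring
  rw [Finset.prod_congr rfl fun i _ => h i, Finset.prod_mul_distrib,
    Finset.prod_pow_eq_pow_sum, sum_card_Ioi]

lemma prod_filter_lt_eq {M : Type*} [CommMonoid M] {n : ℕ} (f : Fin n → Fin n → M) :
    ∏ p ∈ univ.filter (fun p : Fin n × Fin n => p.1 < p.2), f p.1 p.2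
      = ∏ i : Fin n, ∏ j ∈ Finset.Ioi i, f i j := by
  rw [Finset.prod_sigma' univ (fun i => Finset.Ioi i) (fun i j => f i j)]
  refine Finset.prod_bij (fun (p : Fin n × Fin n) _ => (⟨p.1, p.2⟩ : (_ : Fin n) × Fin n)) ?_ ?_ ?_ ?_
  · intro p hp
    simp only [Finset.mem_filter, Finset.mem_univ, true_and] at hp
    simp [Finset.mem_sigma, Finset.mem_Ioi, hp]
  · intro p hp q hq h
    have h1 : p.1 = q.1 := congrArg Sigma.fst h
    have h2 : p.2 = q.2 := congrArg (fun x : (_ : Fin n) × Fin n => x.2) h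
    exact Prod.ext h1 h2
  · intro q hq
    simp only [Finset.mem_sigma, Finset.mem_Ioi] at hq
    exact ⟨(q.1, q.2), by simp [Finset.mem_filter, hq.2], rfl⟩
  · intro p hp
    rfl

end Helpers

section FieldLemma
variable {K : Type*} [Field K]

lemma key_clear (z : K) (hz : z ≠ 0) (s : Finset ℕ) (g : ℕ → K) :
    z ^ s.card * ∏ t ∈ s, (1 - g t * z⁻¹) = ∏ t ∈ s, (z - g t) := by
  rw [← Finset.prod_const, ← Finset.prod_mul_distrib]
  refine Finset.prod_congr rfl fun t _ => ?_
  field_simp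

lemma det_coeffMat_field (n : ℕ) (hn : 1 ≤ n) (A B : ℕ → K)
    (hBinj : Function.Injective B) (hB0 : ∀ t, B t ≠ 0) :
    (coeffMat n A B).det
      = (-1 : K) ^ (n * (n-1) / 2)
        * ∏ s ∈ range (n-1), ∏ t ∈ Finset.Ico s (n-1), (B s - A t) := by
  have hfac := factorMat n hn A B (fun i => (B i.val)⁻¹)
  have hscaled : (Matrix.of fun i j : Fin n => B i.val ^ (n-1) *
        ((Matrix.of fun i j : Fin n =>
          (∏ t ∈ range j.val, (1 - B t * (B i.val)⁻¹)) *
            ∏ t ∈ Finset.Ico j.val (n-1), (1 - A t * (B i.val)⁻¹)) i j))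
      = Matrix.of fun i j : Fin n =>
          (∏ t ∈ range j.val, (B i.val - B t)) * ∏ t ∈ Finset.Ico j.val (n-1), (B i.val - A t) := by
    ext i j
    have hj : j.val ≤ n - 1 := by have := j.isLt; omega
    have e1 := key_clear (B i.val) (hB0 _) (range j.val) B
    have e2 := key_clear (B i.val) (hB0 _) (Finset.Ico j.val (n-1)) A
    rw [Finset.card_range] at e1
    rw [Nat.card_Ico] at e2
    simp only [Matrix.of_apply]
    rw [← e1, ← e2, mul_mul_mul_comm, ← pow_add,
      show j.val + (n-1-j.val) = n-1 by omega]
  have hdet1 : (Matrix.of fun i j : Fin n =>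
          (∏ t ∈ range j.val, (B i.val - B t)) * ∏ t ∈ Finset.Ico j.val (n-1), (B i.val - A t)).det
      = (∏ i : Fin n, B i.val ^ (n-1)) *
        ((Matrix.of fun i j : Fin n =>
          (∏ t ∈ range j.val, (1 - B t * (B i.val)⁻¹)) *
            ∏ t ∈ Finset.Ico j.val (n-1), (1 - A t * (B i.val)⁻¹)).det) := by
    rw [← hscaled]
    exact Matrix.det_mul_column (fun i : Fin n => B i.val ^ (n-1)) _
  have htri : (Matrix.of fun i j : Fin n =>
          (∏ t ∈ range j.val, (B i.val - B t)) *
            ∏ t ∈ Finset.Ico j.val (n-1), (B i.val - A t)).BlockTriangular OrderDual.toDual := by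
    intro i j hij
    have hij' : (i : ℕ) < (j : ℕ) := hij
    have hmem : (i : ℕ) ∈ range j.val := Finset.mem_range.mpr hij'
    rw [Matrix.of_apply, Finset.prod_eq_zero hmem (by rw [sub_self]), zero_mul]
  have hdet2 := Matrix.det_of_lowerTriangular _ htri
  simp only [Matrix.of_apply] at hdet2
  -- the Vandermonde-type product
  have h0 : ∏ i : Fin n, ((∏ t ∈ range i.val, (B i.val - B t)) *
        ∏ t ∈ Finset.Ico i.val (n-1), (B i.val - A t))
      = (∏ i : Fin n, B i.val ^ (n-1)) *
        ((Matrix.vandermonde fun i : Fin n => (B i.val)⁻¹).det * (coeffMat n A B).det) := by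
    rw [← hdet2, hdet1, hfac, Matrix.det_mul]
  rw [Matrix.det_vandermonde, Finset.prod_mul_distrib] at h0
  -- claim 1 : prefactor * inverse Vandermonde = W
  have claim1 : (∏ i : Fin n, B i.val ^ (n-1)) *
        ∏ i : Fin n, ∏ j ∈ Finset.Ioi i, ((B j.val)⁻¹ - (B i.val)⁻¹)
      = ∏ i : Fin n, ∏ j ∈ Finset.Ioi i, (B i.val - B j.val) := by
    rw [prod_pow_card (fun i : Fin n => B i.val), ← Finset.prod_mul_distrib]
    refine Finset.prod_congr rfl fun i _ => ?_
    rw [← Finset.prod_mul_distrib]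
    refine Finset.prod_congr rfl fun j _ => ?_
    rw [mul_sub, mul_inv_cancel_right₀ (hB0 _), mul_comm (B i.val) (B j.val),
      mul_inv_cancel_right₀ (hB0 _)]
  have claim2 : ∏ i : Fin n, ∏ t ∈ range i.val, (B i.val - B t)
      = (-1 : K) ^ (n * (n-1) / 2) * ∏ i : Fin n, ∏ j ∈ Finset.Ioi i, (B i.val - B j.val) := by
    have s1 : ∀ i : Fin n, ∏ t ∈ range i.val, (B i.val - B t)
        = ∏ t ∈ Finset.Iio i, (B i.val - B t.val) :=
      fun i => (prod_Iio_val i (fun t => B i.val - B t)).symm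
    rw [Finset.prod_congr rfl fun i _ => s1 i,
      ← prod_Ioi_comm (fun i j : Fin n => B j.val - B i.val)]
    have s2 : ∀ i : Fin n, ∏ j ∈ Finset.Ioi i, (B j.val - B i.val)
        = ∏ j ∈ Finset.Ioi i, -(B i.val - B j.val) := by
      intro i; refine Finset.prod_congr rfl fun j _ => by rw [neg_sub]
    rw [Finset.prod_congr rfl fun i _ => s2 i, prod_Ioi_neg]
  have claim3 : ∏ i : Fin n, ∏ t ∈ Finset.Ico i.val (n-1), (B i.val - A t)
      = ∏ s ∈ range (n-1), ∏ t ∈ Finset.Ico s (n-1), (B s - A t) := by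
    rw [Fin.prod_univ_eq_prod_range (fun s => ∏ t ∈ Finset.Ico s (n-1), (B s - A t)) n,
      show n = (n-1)+1 by omega, Finset.prod_range_succ]
    simp [Finset.Ico_self]
  have hW0 : (∏ i : Fin n, ∏ j ∈ Finset.Ioi i, (B i.val - B j.val)) ≠ 0 := by
    refine Finset.prod_ne_zero_iff.mpr fun i _ => Finset.prod_ne_zero_iff.mpr fun j hj => ?_
    refine sub_ne_zero.mpr fun h => ?_
    have h2 : i < j := Finset.mem_Ioi.mp hj
    have h2' : (i : ℕ) < (j : ℕ) := h2
    have h3 := hBinj h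
    omega
  rw [claim2, claim3, ← mul_assoc, claim1] at h0
  refine mul_left_cancel₀ hW0 ?_
  linear_combination -h0

end FieldLemma

section ComplexLemma

lemma det_coeffMat_complex (n : ℕ) (hn : 1 ≤ n) (A B : ℕ → ℂ) :
    (coeffMat n A B).det
      = (-1 : ℂ) ^ (n * (n-1) / 2)
        * ∏ s ∈ range (n-1), ∏ t ∈ Finset.Ico s (n-1), (B s - A t) := by
  classical
  have hφ : Function.Injective
      (algebraMap (MvPolynomial ℕ ℂ) (FractionRing (MvPolynomial ℕ ℂ))) :=
    IsFractionRing.injective _ _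
  have hBinj : Function.Injective
      ((algebraMap (MvPolynomial ℕ ℂ) (FractionRing (MvPolynomial ℕ ℂ))) ∘
        (fun t : ℕ => MvPolynomial.X t)) := hφ.comp MvPolynomial.X_injective
  have hB0 : ∀ t : ℕ, ((algebraMap (MvPolynomial ℕ ℂ) (FractionRing (MvPolynomial ℕ ℂ))) ∘
        (fun t : ℕ => MvPolynomial.X t)) t ≠ 0 := by
    intro t h
    exact MvPolynomial.X_ne_zero t (hφ (h.trans (map_zero _).symm))
  have hK := det_coeffMat_field n hn
    ((algebraMap (MvPolynomial ℕ ℂ) (FractionRing (MvPolynomial ℕ ℂ))) ∘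
      fun t => MvPolynomial.C (A t))
    ((algebraMap (MvPolynomial ℕ ℂ) (FractionRing (MvPolynomial ℕ ℂ))) ∘
      fun t : ℕ => MvPolynomial.X t)
    hBinj hB0
  have hR : (coeffMat n (fun t => MvPolynomial.C (A t)) (fun t : ℕ => MvPolynomial.X t)).det
      = (-1 : MvPolynomial ℕ ℂ) ^ (n * (n-1) / 2)
        * ∏ s ∈ range (n-1), ∏ t ∈ Finset.Ico s (n-1),
            (MvPolynomial.X s - MvPolynomial.C (A t)) := by
    apply hφ
    rw [RingHom.map_det, RingHom.mapMatrix_apply, coeffMat_map, hK]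
    simp only [map_mul, map_pow, map_neg, map_one, map_sub, map_prod, Function.comp_apply]
  have hA : ⇑((MvPolynomial.aeval B : MvPolynomial ℕ ℂ →ₐ[ℂ] ℂ).toRingHom) ∘
      (fun t => MvPolynomial.C (A t)) = A := funext fun t => by simp
  have hB : ⇑((MvPolynomial.aeval B : MvPolynomial ℕ ℂ →ₐ[ℂ] ℂ).toRingHom) ∘
      (fun t : ℕ => MvPolynomial.X t) = B := funext fun t => by simp
  calc (coeffMat n A B).det
      = ((coeffMat n (fun t => MvPolynomial.C (A t)) (fun t : ℕ => MvPolynomial.X t)).map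
          ⇑((MvPolynomial.aeval B : MvPolynomial ℕ ℂ →ₐ[ℂ] ℂ).toRingHom)).det := by
        rw [coeffMat_map, hA, hB]
    _ = ((MvPolynomial.aeval B : MvPolynomial ℕ ℂ →ₐ[ℂ] ℂ).toRingHom)
          (coeffMat n (fun t => MvPolynomial.C (A t)) (fun t : ℕ => MvPolynomial.X t)).det := by
        rw [RingHom.map_det, RingHom.mapMatrix_apply]
    _ = _ := by
        rw [hR]
        simp only [map_mul, map_pow, map_neg, map_one, map_sub, map_prod]
        congr 1
        refine Finset.prod_congr rfl fun s _ => Finset.prod_congr rfl fun t _ => ?_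
        simp

lemma det_prodMat (n : ℕ) (hn : 1 ≤ n) (A B : ℕ → ℂ) (x : Fin n → ℂ) :
    (Matrix.of fun i j : Fin n =>
      (∏ t ∈ range j.val, (1 - B t * x i)) * ∏ t ∈ Finset.Ico j.val (n-1), (1 - A t * x i)).det
    = (∏ p ∈ univ.filter (fun p : Fin n × Fin n => p.1 < p.2), (x p.1 - x p.2))
      * ∏ s ∈ range (n-1), ∏ t ∈ Finset.Ico s (n-1), (B s - A t) := by
  rw [factorMat n hn A B x, Matrix.det_mul, Matrix.det_vandermonde, det_coeffMat_complex n hn A B,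
    prod_filter_lt_eq (fun i j => x i - x j)]
  have h1 : ∏ i : Fin n, ∏ j ∈ Finset.Ioi i, (x j - x i)
      = (-1:ℂ)^(n*(n-1)/2) * ∏ i : Fin n, ∏ j ∈ Finset.Ioi i, (x i - x j) := by
    have s2 : ∀ i : Fin n, ∏ j ∈ Finset.Ioi i, (x j - x i) = ∏ j ∈ Finset.Ioi i, -(x i - x j) :=
      fun i => Finset.prod_congr rfl fun j _ => by rw [neg_sub]
    rw [Finset.prod_congr rfl fun i _ => s2 i, prod_Ioi_neg]
  rw [h1]
  have hsq : ((-1:ℂ)^(n*(n-1)/2)) * ((-1:ℂ)^(n*(n-1)/2)) = 1 := by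
    rw [← pow_add, ← two_mul, pow_mul]
    norm_num
  calc ((-1:ℂ)^(n*(n-1)/2) * ∏ i : Fin n, ∏ j ∈ Finset.Ioi i, (x i - x j)) *
        ((-1:ℂ)^(n*(n-1)/2) * ∏ s ∈ range (n-1), ∏ t ∈ Finset.Ico s (n-1), (B s - A t))
      = (((-1:ℂ)^(n*(n-1)/2)) * ((-1:ℂ)^(n*(n-1)/2))) *
        ((∏ i : Fin n, ∏ j ∈ Finset.Ioi i, (x i - x j)) *
          ∏ s ∈ range (n-1), ∏ t ∈ Finset.Ico s (n-1), (B s - A t)) := by ring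
    _ = _ := by rw [hsq, one_mul]

end ComplexLemma

section Arith

lemma sixS (m : ℕ) : 6 * ∑ s ∈ range m, (1+s)*(m-s) = (m+2)*(m+1)*m := by
  induction m with
  | zero => simp
  | succ m ih =>
    have h1 : ∑ s ∈ range (m+1), (1+s)*(m+1-s)
        = (∑ s ∈ range (m+1), (1+s)*(m-s)) + ∑ s ∈ range (m+1), (1+s) := by
      rw [← Finset.sum_add_distrib]
      refine Finset.sum_congr rfl fun s hs => ?_
      have hs' : s ≤ m := by simpa [Nat.lt_succ_iff] using hs
      rw [show m + 1 - s = (m - s) + 1 by omega, Nat.mul_add, mul_one]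
    have h2 : ∑ s ∈ range (m+1), (1+s)*(m-s) = ∑ s ∈ range m, (1+s)*(m-s) := by
      rw [Finset.sum_range_succ]
      simp
    have h3 : (∑ s ∈ range (m+1), s) * 2 = (m+1)*m := by
      have := Finset.sum_range_id_mul_two (m+1)
      simpa using this
    have h4 : ∑ s ∈ range (m+1), (1+s) = (m+1) + ∑ s ∈ range (m+1), s := by
      rw [Finset.sum_add_distrib, Finset.sum_const, Finset.card_range, smul_eq_mul, mul_one]
    calc 6 * ∑ s ∈ range (m+1), (1+s)*(m+1-s)
        = 6 * (∑ s ∈ range m, (1+s)*(m-s)) + 6*(m+1) + 3*((∑ s ∈ range (m+1), s)*2) := by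
          rw [h1, h2, h4]; ring
      _ = (m+2)*(m+1)*m + 6*(m+1) + 3*((m+1)*m) := by rw [ih, h3]
      _ = (m+1+2)*(m+1+1)*(m+1) := by ring

lemma sumE (n : ℕ) (hn : 1 ≤ n) : ∑ s ∈ range (n-1), (1+s)*(n-1-s) = (n+1)*n*(n-1)/6 := by
  have h := sixS (n-1)
  rw [show n-1+2 = n+1 by omega, show n-1+1 = n by omega] at h
  set P := (n+1)*n*(n-1) with hP
  omega

lemma sumN' (m : ℕ) : 2 * ∑ s ∈ range m, (m-s) = (m+1)*m := by
  induction m with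
  | zero => simp
  | succ m ih =>
    have h1 : ∑ s ∈ range (m+1), (m+1-s) = (∑ s ∈ range (m+1), (m-s)) + (m+1) := by
      have : ∑ s ∈ range (m+1), (m+1-s) = ∑ s ∈ range (m+1), ((m-s) + 1) := by
        refine Finset.sum_congr rfl fun s hs => ?_
        have : s ≤ m := by simpa [Nat.lt_succ_iff] using hs
        omega
      rw [this, Finset.sum_add_distrib, Finset.sum_const, Finset.card_range, smul_eq_mul, mul_one]
    have h2 : ∑ s ∈ range (m+1), (m-s) = ∑ s ∈ range m, (m-s) := by
      rw [Finset.sum_range_succ]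
      simp
    calc 2 * ∑ s ∈ range (m+1), (m+1-s) = 2 * ∑ s ∈ range m, (m-s) + 2*(m+1) := by
          rw [h1, h2]; ring
      _ = (m+1)*m + 2*(m+1) := by rw [ih]
      _ = (m+1+1)*(m+1) := by ring

lemma sumN (n : ℕ) (hn : 1 ≤ n) : ∑ s ∈ range (n-1), (n-1-s) = n*(n-1)/2 := by
  have h := sumN' (n-1)
  rw [show n-1+1 = n by omega] at h
  set P := n*(n-1) with hP
  omega

end Arith


lemma T_eval (n : ℕ) (hn : 1 ≤ n) (a b q : ℂ) :
    ∏ s ∈ range (n-1), ∏ t ∈ Finset.Ico s (n-1), (a*q*q^s - a*b*q^2*q^t)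
      = a ^ (n*(n-1)/2) * q ^ ((n+1)*n*(n-1)/6) * ∏ j : Fin n, qPoch (b*q) q j.val := by
  have inner : ∀ s, ∏ t ∈ Finset.Ico s (n-1), (a*q*q^s - a*b*q^2*q^t)
      = (a*q*q^s)^(n-1-s) * qPoch (b*q) q (n-1-s) := by
    intro s
    rw [Finset.prod_Ico_eq_prod_range]
    unfold qPoch
    have hpt : ∀ d, a*q*q^s - a*b*q^2*q^(s+d) = (a*q*q^s) * (1 - (b*q)*q^d) := by
      intro d
      rw [pow_add]
      ring
    rw [Finset.prod_congr rfl fun d _ => hpt d, Finset.prod_mul_distrib, Finset.prod_const,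
      Finset.card_range]
  rw [Finset.prod_congr rfl fun s _ => inner s, Finset.prod_mul_distrib]
  have hsecond : ∏ s ∈ range (n-1), qPoch (b*q) q (n-1-s) = ∏ j : Fin n, qPoch (b*q) q j.val := by
    rw [← Finset.prod_range_reflect (fun j => qPoch (b*q) q ((n-1) - j)) (n-1)]
    rw [Finset.prod_congr rfl (fun j hj => by
      have := Finset.mem_range.mp hj
      show qPoch (b*q) q ((n-1) - ((n-1) - 1 - j)) = qPoch (b*q) q (j+1)
      congr 1
      omega)]
    have h0 : (1:ℂ) = qPoch (b*q) q 0 := by simp [qPoch]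
    rw [← mul_one (∏ j ∈ range (n-1), qPoch (b*q) q (j+1)), h0,
      ← Finset.prod_range_succ', show n-1+1 = n by omega,
      ← Fin.prod_univ_eq_prod_range (fun j => qPoch (b*q) q j) n]
  have hfirst : ∏ s ∈ range (n-1), (a*q*q^s)^(n-1-s)
      = a^(n*(n-1)/2) * q^((n+1)*n*(n-1)/6) := by
    have h1 : ∀ s, (a*q*q^s)^(n-1-s) = a^(n-1-s) * q^((1+s)*(n-1-s)) := by
      intro s
      rw [show a*q*q^s = a * q^(1+s) by rw [pow_add, pow_one]; ring, mul_pow, ← pow_mul]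
    rw [Finset.prod_congr rfl fun s _ => h1 s, Finset.prod_mul_distrib,
      Finset.prod_pow_eq_pow_sum, Finset.prod_pow_eq_pow_sum, sumN n hn, sumE n hn]
  rw [hfirst, hsecond]


theorem determinant_formula_arbitrary_rows
    (n : ℕ) (hn : 1 ≤ n) (k : ℕ → ℕ) (hk : ∀ i, 1 ≤ k i)
    (a b q : ℂ)
    (hden : ∀ i : Fin n, qPoch (a * b * q ^ 2) q (k (i.val + 1) - 1 + (n - 1)) ≠ 0) :
    (Matrix.of fun i j : Fin n =>
        qPoch (a * q) q (k (i.val + 1) - 1 + j.val)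
          / qPoch (a * b * q ^ 2) q (k (i.val + 1) - 1 + j.val)).det
      = a ^ (n * (n-1) / 2) * q ^ ((n+1) * n * (n-1) / 6)
        * (∏ i : Fin n, qPoch (a * q) q (k (i.val + 1) - 1)
            / qPoch (a * b * q ^ 2) q (k (i.val + 1) - 1 + (n - 1)))
        * (∏ p ∈ Finset.univ.filter (fun p : Fin n × Fin n => p.1 < p.2),
            (q ^ (k (p.1.val + 1) - 1) - q ^ (k (p.2.val + 1) - 1)))
        * ∏ j : Fin n, qPoch (b * q) q j.val := by
  have hnum : ∀ (i j : Fin n), qPoch (a*q) q (k (i.val+1) - 1 + j.val)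
      = qPoch (a*q) q (k (i.val+1) - 1) *
        ∏ t ∈ range j.val, (1 - (a*q*q^t) * q^(k (i.val+1) - 1)) := by
    intro i j
    unfold qPoch
    rw [Finset.prod_range_add]
    congr 1
    refine Finset.prod_congr rfl fun t _ => ?_
    rw [pow_add]
    ring
  have hden2 : ∀ (i j : Fin n), qPoch (a*b*q^2) q (k (i.val+1) - 1 + (n-1))
      = qPoch (a*b*q^2) q (k (i.val+1) - 1 + j.val) *
        ∏ t ∈ Finset.Ico j.val (n-1), (1 - (a*b*q^2*q^t) * q^(k (i.val+1) - 1)) := by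
    intro i j
    have hj : j.val ≤ n-1 := by have := j.isLt; omega
    unfold qPoch
    rw [show k (i.val+1) - 1 + (n-1) = (k (i.val+1) - 1 + j.val) + (n-1-j.val) by omega,
      Finset.prod_range_add]
    congr 1
    rw [Finset.prod_Ico_eq_prod_range, show n-1-j.val = n-1-j.val by rfl]
    refine Finset.prod_congr rfl fun t _ => ?_
    simp only [pow_add]
    ring
  have hentry : ∀ (i j : Fin n),
      qPoch (a*q) q (k (i.val+1) - 1 + j.val) / qPoch (a*b*q^2) q (k (i.val+1) - 1 + j.val)
      = (qPoch (a*q) q (k (i.val+1) - 1) / qPoch (a*b*q^2) q (k (i.val+1) - 1 + (n-1))) *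
        ((∏ t ∈ range j.val, (1 - (a*q*q^t) * q^(k (i.val+1) - 1))) *
          ∏ t ∈ Finset.Ico j.val (n-1), (1 - (a*b*q^2*q^t) * q^(k (i.val+1) - 1))) := by
    intro i j
    have hd := hden i
    have hsplit := hden2 i j
    have h1 : qPoch (a*b*q^2) q (k (i.val+1) - 1 + j.val) ≠ 0 := fun h => hd (by
      rw [hsplit, h, zero_mul])
    have h2 : (∏ t ∈ Finset.Ico j.val (n-1), (1 - (a*b*q^2*q^t) * q^(k (i.val+1) - 1))) ≠ 0 :=
      fun h => hd (by rw [hsplit, h, mul_zero])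
    rw [hnum i j, hsplit]
    rw [eq_comm, div_mul_eq_mul_div, div_eq_div_iff (mul_ne_zero h1 h2) h1]
    ring
  have hstep1 : (Matrix.of fun i j : Fin n =>
        qPoch (a * q) q (k (i.val + 1) - 1 + j.val)
          / qPoch (a * b * q ^ 2) q (k (i.val + 1) - 1 + j.val))
      = Matrix.of fun i j : Fin n =>
          (qPoch (a*q) q (k (i.val+1) - 1) / qPoch (a*b*q^2) q (k (i.val+1) - 1 + (n-1))) *
          ((Matrix.of fun i j : Fin n =>
            (∏ t ∈ range j.val, (1 - (a*q*q^t) * q^(k (i.val+1) - 1))) *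
              ∏ t ∈ Finset.Ico j.val (n-1), (1 - (a*b*q^2*q^t) * q^(k (i.val+1) - 1))) i j) := by
    ext i j
    exact hentry i j
  rw [hstep1, Matrix.det_mul_column
    (fun i : Fin n => qPoch (a*q) q (k (i.val+1) - 1) / qPoch (a*b*q^2) q (k (i.val+1) - 1 + (n-1))) _]
  have hdetG := det_prodMat n hn (fun t => a*b*q^2*q^t) (fun t => a*q*q^t)
    (fun i : Fin n => q^(k (i.val+1) - 1))
  rw [hdetG, T_eval n hn a b q]
  ring
end

section
/- Let n ≥ 2 and P_n(k,a,b,c;q) = X_n(k,a;q) M_n(k,a,b,c;q) Y_n(q) as in the paper, and let k' = (k_1,...,k_{n-1}). Then det P_n(k,a,b,c;q)^{[1,n-1]}_{[2,n]} = \frac{(-1)^{n-1} det M_{n-1}(k', aq, b, cq; q)}{q^{\sum_{i=1}^{n-1} k_i} \prod_{1≤i<j<n}(q^{k_i} - q^{k_j})}, where A^{[1,n-1]}_{[2,n]} denotes the submatrix on the first n-1 rows and last n-1 columns. -/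
open Finset

/-- Gaussian binomial coefficient, via the q-Pascal recurrence. -/
noncomputable def qbinom (q : ℂ) : ℕ → ℕ → ℂ
  | _, 0 => 1
  | 0, _+1 => 0
  | m+1, r+1 => qbinom q m r + q ^ (r+1) * qbinom q m (r+1)

/-- Gaussian binomial coefficient with integer arguments, zero when `r < 0` or `r > m`. -/
noncomputable def qbinomZ (q : ℂ) (m r : ℤ) : ℂ :=
  if 0 ≤ r ∧ r ≤ m then qbinom q m.toNat r.toNat else 0

/-- The matrix `M_n(k,a,b,c;q)` with (1-based) `(i,j)` entry
`(q^{k_i-1} - c q^{j-1}) (a q^{k_i};q)_{j-1} (a b q^{k_i+j};q)_{n-j}`. -/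
noncomputable def Mmat (n : ℕ) (k : ℕ → ℕ) (a b c q : ℂ) : Matrix (Fin n) (Fin n) ℂ :=
  Matrix.of fun i j =>
    (q ^ (k (i.val + 1) - 1) - c * q ^ j.val)
      * qPoch (a * q ^ (k (i.val + 1))) q j.val
      * qPoch (a * b * q ^ (k (i.val + 1) + j.val + 1)) q (n - 1 - j.val)

/-- The lower triangular matrix `X_n(k,a;q)`. -/
noncomputable def Xmat (n : ℕ) (k : ℕ → ℕ) (a q : ℂ) : Matrix (Fin n) (Fin n) ℂ :=
  Matrix.of fun i j =>
    -(if j.val ≤ i.val then (1 : ℂ) else 0)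
      / (q ^ (k (j.val + 1)) * (1 - a * q ^ (k (j.val + 1)))
          * ∏ l ∈ (Finset.Icc 1 (i.val + 1)).erase (j.val + 1),
              (q ^ (k l) - q ^ (k (j.val + 1))))

/-- The lower unitriangular matrix `Y_n(q)`. -/
noncomputable def Ymat (n : ℕ) (q : ℂ) : Matrix (Fin n) (Fin n) ℂ :=
  Matrix.of fun i j =>
    (-1 : ℂ) ^ (i.val + j.val)
      * q ^ (-((((i.val : ℤ) - j.val) * (2 * (n : ℤ) - 1 - i.val - j.val)) / 2))
      * qbinomZ q ((n : ℤ) - (j.val + 1)) ((i.val : ℤ) - j.val)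

/-- The lower triangular matrix `L_n(k,a,b;q)`. -/
noncomputable def Lmat (n : ℕ) (k : ℕ → ℕ) (a b q : ℂ) : Matrix (Fin n) (Fin n) ℂ :=
  Matrix.of fun i j =>
    -(if j.val ≤ i.val then (1 : ℂ) else 0)
      / (q ^ (k (j.val + 1)) * (1 - a * b * q ^ (k (j.val + 1) + n - 1))
          * ∏ l ∈ (Finset.Icc 1 (i.val + 1)).erase (j.val + 1),
              (q ^ (k l) - q ^ (k (j.val + 1))))

/-- The upper unitriangular matrix `U_n(q)`. -/
noncomputable def Umat (n : ℕ) (q : ℂ) : Matrix (Fin n) (Fin n) ℂ :=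
  Matrix.of fun i j =>
    (-1 : ℂ) ^ (i.val + j.val)
      * q ^ ((((j.val : ℤ) - i.val) * ((j.val : ℤ) - i.val + 1)) / 2)
      * qbinomZ q (j.val : ℤ) ((j.val : ℤ) - i.val)

lemma qPoch_succ' (x q : ℂ) (m : ℕ) :
    qPoch x q (m+1) = (1-x) * qPoch (x*q) q m := by
  rw [qPoch, qPoch, Finset.prod_range_succ', mul_comm]
  congr 1
  · simp
  · exact Finset.prod_congr rfl fun i _ => by rw [pow_succ]; ring

lemma qbinom_zero (q : ℂ) (m : ℕ) : qbinom q m 0 = 1 := by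
  cases m <;> rfl

lemma Xmat_zero (n : ℕ) (k : ℕ → ℕ) (a q : ℂ) (i j : Fin n) (h : i.val < j.val) :
    Xmat n k a q i j = 0 := by
  simp only [Xmat, Matrix.of_apply]
  rw [if_neg (by omega)]
  simp

lemma Ymat_zero (n : ℕ) (q : ℂ) (i j : Fin n) (h : i.val < j.val) :
    Ymat n q i j = 0 := by
  simp only [Ymat, Matrix.of_apply, qbinomZ]
  rw [if_neg (by push_neg; intro h0; omega)]
  ring

theorem minor_of_P_equals_det_M
    (n : ℕ) (hn : 2 ≤ n) (k : ℕ → ℕ) (hk : ∀ i, 1 ≤ k i)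
    (a b c q : ℂ) (hq : q ≠ 0)
    (ha : ∀ l, 1 ≤ l → l ≤ n → a * q ^ (k l) ≠ 1)
    (hkd : ∀ i j, 1 ≤ i → i ≤ n → 1 ≤ j → j ≤ n → i ≠ j → q ^ (k i) ≠ q ^ (k j)) :
    (Matrix.of fun r c' : Fin (n - 1) =>
        (Xmat n k a q * Mmat n k a b c q * Ymat n q)
          ⟨r.val, by omega⟩ ⟨c'.val + 1, by omega⟩).det
      = (-1 : ℂ) ^ (n - 1) * (Mmat (n - 1) k (a * q) b (c * q) q).det
        / (q ^ (∑ i ∈ Finset.Icc 1 (n - 1), k i)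
            * ∏ p ∈ (Finset.Icc 1 (n - 1) ×ˢ Finset.Icc 1 (n - 1)).filter
                (fun p => p.1 < p.2),
                (q ^ (k p.1) - q ^ (k p.2))) := by
  obtain ⟨N, rfl⟩ : ∃ N, n = N + 1 := ⟨n - 1, by omega⟩
  have hN : 1 ≤ N := by omega
  show (Matrix.of fun r c' : Fin N =>
        (Xmat (N+1) k a q * Mmat (N+1) k a b c q * Ymat (N+1) q)
          ⟨r.val, by omega⟩ ⟨c'.val + 1, by omega⟩).det
      = (-1 : ℂ) ^ N * (Mmat N k (a * q) b (c * q) q).det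
        / (q ^ (∑ i ∈ Finset.Icc 1 N, k i)
            * ∏ p ∈ (Finset.Icc 1 N ×ˢ Finset.Icc 1 N).filter
                (fun p => p.1 < p.2),
                (q ^ (k p.1) - q ^ (k p.2)))
  set A : Matrix (Fin N) (Fin N) ℂ :=
    Matrix.of fun i j => Xmat (N+1) k a q i.castSucc j.castSucc with hA
  set B : Matrix (Fin N) (Fin N) ℂ :=
    Matrix.of fun i j => Mmat (N+1) k a b c q i.castSucc j.succ with hB
  set C : Matrix (Fin N) (Fin N) ℂ :=
    Matrix.of fun i j => Ymat (N+1) q i.succ j.succ with hC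
  have key : (Matrix.of fun r c' : Fin N =>
        (Xmat (N+1) k a q * Mmat (N+1) k a b c q * Ymat (N+1) q)
          ⟨r.val, by omega⟩ ⟨c'.val + 1, by omega⟩) = A * B * C := by
    ext r c0
    show (Xmat (N+1) k a q * Mmat (N+1) k a b c q * Ymat (N+1) q) r.castSucc c0.succ
        = (A * B * C) r c0
    simp only [Matrix.mul_apply, hA, hB, hC, Matrix.of_apply]
    rw [Fin.sum_univ_succ]
    rw [Ymat_zero (N+1) q 0 c0.succ (by simp), mul_zero, zero_add]
    refine Finset.sum_congr rfl fun s _ => ?_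
    congr 1
    rw [Fin.sum_univ_castSucc]
    rw [Xmat_zero (N+1) k a q r.castSucc (Fin.last N) (by simp [Fin.last]),
      zero_mul, add_zero]
  rw [key, Matrix.det_mul, Matrix.det_mul]
  have hdetC : C.det = 1 := by
    rw [Matrix.det_of_lowerTriangular C (fun i j hij =>
      Ymat_zero (N+1) q i.succ j.succ (by
        simp only [Fin.val_succ]
        have : i < j := hij
        omega))]
    refine Finset.prod_eq_one fun i _ => ?_
    show Ymat (N+1) q i.succ i.succ = 1
    simp only [Ymat, Matrix.of_apply, Fin.val_succ, sub_self, zero_mul]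
    rw [qbinomZ, if_pos ⟨le_refl 0, by push_cast; omega⟩]
    rw [Int.toNat_zero, qbinom_zero, mul_one,
      show (-((0:ℤ) / 2)) = 0 by decide, zpow_zero, mul_one]
    exact Even.neg_one_pow (⟨i.val + 1, rfl⟩ : Even (i.val + 1 + (i.val + 1)))
  have hdetA : A.det = ∏ i : Fin N,
      -(1 / (q ^ (k (i.val + 1)) * (1 - a * q ^ (k (i.val + 1)))
        * ∏ l ∈ Finset.Icc 1 i.val, (q ^ (k l) - q ^ (k (i.val + 1))))) := by
    rw [Matrix.det_of_lowerTriangular A (fun i j hij =>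
      Xmat_zero (N+1) k a q i.castSucc j.castSucc (by
        have : i < j := hij
        simpa using this))]
    refine Finset.prod_congr rfl fun i _ => ?_
    show Xmat (N+1) k a q i.castSucc i.castSucc = _
    simp only [Xmat, Matrix.of_apply, Fin.coe_castSucc]
    rw [if_pos (le_refl _),
      show (Finset.Icc 1 (i.val+1)).erase (i.val+1) = Finset.Icc 1 i.val from by
        ext l; simp only [Finset.mem_erase, Finset.mem_Icc]; omega,
      neg_div]
  have hdetB : B.det = (∏ i : Fin N, (1 - a * q ^ (k (i.val + 1))))
      * (Mmat N k (a * q) b (c * q) q).det := by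
    have hB' : B = Matrix.of fun i j =>
        (1 - a * q ^ (k (i.val + 1))) * Mmat N k (a * q) b (c * q) q i j := by
      ext i j
      simp only [hB, Matrix.of_apply, Mmat, Fin.coe_castSucc, Fin.val_succ]
      rw [qPoch_succ']
      rw [show (N + 1 - 1 - (j.val + 1)) = N - 1 - j.val from by omega]
      rw [show a * b * q ^ (k (i.val+1) + (j.val+1) + 1)
            = a * q * b * q ^ (k (i.val+1) + j.val + 1) from by
          rw [show k (i.val+1) + (j.val+1) + 1 = (k (i.val+1) + j.val + 1) + 1 from by omega,
            pow_succ]; ring]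
      rw [show a * q ^ (k (i.val+1)) * q = a * q * q ^ (k (i.val+1)) from by ring]
      ring
    rw [hB', Matrix.det_mul_column]
  rw [hdetA, hdetB, hdetC, mul_one]
  set Q : ℂ := ∏ p ∈ (Finset.Icc 1 N ×ˢ Finset.Icc 1 N).filter
      (fun p => p.1 < p.2), (q ^ (k p.1) - q ^ (k p.2)) with hQdef
  set E : ℂ := ∏ i : Fin N, (1 - a * q ^ (k (i.val + 1))) with hEdef
  have hsum : ∑ i : Fin N, k (i.val + 1) = ∑ i ∈ Finset.Icc 1 N, k i := by
    rw [← Finset.Ico_add_one_right_eq_Icc, Finset.sum_Ico_eq_sum_range,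
      Fin.sum_univ_eq_sum_range (fun i => k (i + 1)) N,
      show N + 1 - 1 = N from rfl]
    exact Finset.sum_congr rfl fun i _ => by rw [add_comm]
  have hP : (∏ i : Fin N, ∏ l ∈ Finset.Icc 1 i.val, (q ^ (k l) - q ^ (k (i.val + 1)))) = Q := by
    rw [hQdef, Finset.prod_filter, Finset.prod_product_right]
    conv_rhs => rw [← Finset.Ico_add_one_right_eq_Icc, Finset.prod_Ico_eq_prod_range,
      show N + 1 - 1 = N from rfl]
    rw [Fin.prod_univ_eq_prod_range
        (fun m => ∏ l ∈ Finset.Icc 1 m, (q ^ (k l) - q ^ (k (m + 1)))) N]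
    refine Finset.prod_congr rfl fun m hm => ?_
    show _ = ∏ x ∈ Finset.Icc 1 N, if x < 1 + m then q ^ k x - q ^ k (1 + m) else 1
    rw [← Finset.prod_filter,
      show (Finset.Icc 1 N).filter (fun i => i < 1 + m) = Finset.Icc 1 m from by
        ext l
        simp only [Finset.mem_filter, Finset.mem_Icc, Finset.mem_range] at *
        omega]
    exact Finset.prod_congr rfl fun l _ => by rw [add_comm 1 m]
  have hprodD : (∏ i : Fin N, (q ^ (k (i.val+1)) * (1 - a * q ^ (k (i.val+1)))
      * ∏ l ∈ Finset.Icc 1 i.val, (q ^ (k l) - q ^ (k (i.val + 1)))))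
      = q ^ (∑ i ∈ Finset.Icc 1 N, k i) * E * Q := by
    rw [Finset.prod_mul_distrib, Finset.prod_mul_distrib,
      Finset.prod_pow_eq_pow_sum, hsum, hP, hEdef]
  have e1 : (∏ i : Fin N, -(1 / (q ^ (k (i.val+1)) * (1 - a * q ^ (k (i.val+1)))
      * ∏ l ∈ Finset.Icc 1 i.val, (q ^ (k l) - q ^ (k (i.val + 1))))))
      = (-1:ℂ)^N * (q ^ (∑ i ∈ Finset.Icc 1 N, k i) * E * Q)⁻¹ := by
    rw [← hprodD, ← Finset.prod_inv_distrib]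
    calc (∏ i : Fin N, -(1 / (q ^ (k (i.val+1)) * (1 - a * q ^ (k (i.val+1)))
        * ∏ l ∈ Finset.Icc 1 i.val, (q ^ (k l) - q ^ (k (i.val + 1))))))
        = ∏ i : Fin N, ((-1) * (q ^ (k (i.val+1)) * (1 - a * q ^ (k (i.val+1)))
          * ∏ l ∈ Finset.Icc 1 i.val, (q ^ (k l) - q ^ (k (i.val + 1))))⁻¹) :=
          Finset.prod_congr rfl fun i _ => by rw [one_div]; ring
      _ = _ := by
          rw [Finset.prod_mul_distrib, Finset.prod_const, Finset.card_univ,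
            Fintype.card_fin]
  have hE : E ≠ 0 := by
    rw [hEdef]
    exact Finset.prod_ne_zero_iff.mpr fun i _ =>
      sub_ne_zero.mpr (Ne.symm (ha (i.val+1) (by omega) (by omega)))
  have hQ : Q ≠ 0 := by
    rw [hQdef]
    refine Finset.prod_ne_zero_iff.mpr fun p hp => ?_
    simp only [Finset.mem_filter, Finset.mem_product, Finset.mem_Icc] at hp
    exact sub_ne_zero.mpr
      (hkd p.1 p.2 (by omega) (by omega) (by omega) (by omega) (by omega))
  have hq0 : q ^ (∑ i ∈ Finset.Icc 1 N, k i) ≠ 0 := pow_ne_zero _ hq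
  rw [e1]
  field_simp
end
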